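/- A support-arena play has infinite capacity if and only if there exists an index i that is remanent (tracked forever by the tracking list from step i onward) and leaks infinitely often. -/

import Mathlib

variable {Q : Type}

/-- Domain of a transfer graph. -/
def dom (G : Set (Q × Q)) : Set Q := {q | ∃ r, (q, r) ∈ G}

/-- Image of a transfer graph. -/
def im (G : Set (Q × Q)) : Set Q := {r | ∃ q, (q, r) ∈ G}

/-- A support-arena play, letters forgotten: supports together with the sequence
of transfer graphs (`G n` goes from `S n` to `S (n+1)`). -/
structure GraphPlay (Q : Type) where
  S : ℕ → Set Q
  G : ℕ → Set (Q × Q)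
  hdom : ∀ n, dom (G n) = S n
  him : ∀ n, im (G n) = S (n + 1)

/-- The composed transfer graph G[i,j]: (s,t) ∈ G[i,j] iff there is a path
s = path i, ..., path j = t with (path k, path (k+1)) ∈ G k for i ≤ k < j. -/
def Gseg (G : ℕ → Set (Q × Q)) (i j : ℕ) : Set (Q × Q) :=
  {p | ∃ path : ℕ → Q, path i = p.1 ∧ path j = p.2 ∧
    ∀ k, i ≤ k → k < j → (path k, path (k + 1)) ∈ G k}

/-- Relational composition of transfer graphs. -/
def relComp (G H : Set (Q × Q)) : Set (Q × Q) := {p | ∃ z, (p.1, z) ∈ G ∧ (z, p.2) ∈ H}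

/-- G leaks at H. -/
def Leaks (G H : Set (Q × Q)) : Prop :=
  ∃ q x y : Q, (q, y) ∈ relComp G H ∧ (x, y) ∈ H ∧ (q, x) ∉ G

/-- G separates the pair (r,t). -/
def Separates (G : Set (Q × Q)) (r t : Q) : Prop := ∃ q, (q, r) ∈ G ∧ (q, t) ∉ G

/-- (r,t) ∈ R_k : r and t have a common descendant. -/
def Rrel (G : ℕ → Set (Q × Q)) (k : ℕ) (r t : Q) : Prop :=
  ∃ j, k ≤ j ∧ ∃ y, (r, y) ∈ Gseg G k j ∧ (t, y) ∈ Gseg G k j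

/-- Index i leaks infinitely often: G[i,j] leaks at G_{j+1} for infinitely many j. -/
def LeaksInfOften (G : ℕ → Set (Q × Q)) (i : ℕ) : Prop :=
  {j | Leaks (Gseg G i j) (G j)}.Infinite

/-- An accumulator: a successor-closed sequence of subsets of the supports. -/
def IsAccumulator (S : ℕ → Set Q) (G : ℕ → Set (Q × Q)) (T : ℕ → Set Q) : Prop :=
  (∀ j, T j ⊆ S j) ∧ ∀ j s t, s ∈ T j → (s, t) ∈ G j → t ∈ T (j + 1)

/-- The entries of an accumulator. -/
def Entries (G : ℕ → Set (Q × Q)) (T : ℕ → Set Q) : Set (ℕ × Q × Q) :=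
  {e | (e.2.1, e.2.2) ∈ G e.1 ∧ e.2.1 ∉ T e.1 ∧ e.2.2 ∈ T (e.1 + 1)}

/-- A play has infinite capacity if some accumulator has infinitely many entries. -/
def InfiniteCapacity (P : GraphPlay Q) : Prop :=
  ∃ T, IsAccumulator P.S P.G T ∧ (Entries P.G T).Infinite

open Classical in
/-- The filtering stage of the tracking-list update: keep a graph iff it separates
some pair of states not separated by any graph kept earlier in the list. -/
noncomputable def filterStep (acc : List (Set (Q × Q))) :
    List (Set (Q × Q)) → List (Set (Q × Q))
  | [] => []
  | H :: rest =>
    if ∃ r t : Q, Separates H r t ∧ ∀ H' ∈ acc, ¬ Separates H' r t then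
      H :: filterStep (acc ++ [H]) rest
    else
      filterStep acc rest

/-- The tracking list after n steps of the play: every graph of the previous list is
composed with the new transfer graph, the new transfer graph is appended, and the
list is filtered. -/
noncomputable def trackList (G : ℕ → Set (Q × Q)) : ℕ → List (Set (Q × Q))
  | 0 => []
  | n + 1 => filterStep [] (((trackList G n).map (fun H => relComp H (G n))) ++ [G n])

/-- Index i is remanent: from step i onward, G[i,n] stays in the tracking list. -/
def Remanent (G : ℕ → Set (Q × Q)) (i : ℕ) : Prop :=
  ∀ n, i < n → Gseg G i n ∈ trackList G n

/-!
If no index leaks infinitely often, let `β` be past its last leak: from then on the flow of an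
accumulator from time `β` never absorbs a state from outside, so a later entry at time `j` makes
the flow from time `j + 1` strictly larger. Infinitely many entries would then make flows grow
without bound inside a finite set of states.

Now let `I` be the least index that leaks infinitely often. Separations of pairs of states are
transported along steps at which the graphs do not leak, and a leak of `G[I,j]` becomes a leak
of any `G[a,j]` separating whatever `G[I,j]` separates. So once no `a < I` leaks any more,
`G[I,n]` keeps separating a pair of states that no `G[a,n]` with `a < I` separates, and this
pair keeps the least index `i ≥ I` tracked at that time in the tracking list forever; `i` leaks
whenever `I` does. Finally, a leak of `G[i,j]` witnessed by `q` is an entry of the accumulator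
of the descendants of `q`, and by pigeonhole one `q` witnesses infinitely many leaks.
-/

open Filter

section Relations

variable {A B E R : Set (Q × Q)}

lemma relComp_assoc (A B C : Set (Q × Q)) :
    relComp (relComp A B) C = relComp A (relComp B C) := by
  ext ⟨a, d⟩
  simp only [relComp, Set.mem_ofPred_eq]
  grind

lemma relComp_empty_left (E : Set (Q × Q)) : relComp ∅ E = ∅ := by
  ext
  simp [relComp]

lemma Separates.of_relComp {r t : Q} (h : Separates (relComp R B) r t) : Separates B r t := by
  obtain ⟨q, ⟨p, hqp, hpr⟩, hqt⟩ := h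
  exact ⟨p, hpr, fun hpt => hqt ⟨p, hqp, hpt⟩⟩

lemma Leaks.of_relComp (h : Leaks (relComp R B) E) : Leaks B E := by
  obtain ⟨q, x, y, ⟨z, ⟨p, hqp, hpz⟩, hzy⟩, hxy, hqx⟩ := h
  exact ⟨p, x, y, ⟨z, hpz, hzy⟩, hxy, fun hpx => hqx ⟨p, hqp, hpx⟩⟩

lemma mem_relComp_iff_of_not_leaks (hA : ¬ Leaks A E) {q x y : Q} (hxy : (x, y) ∈ E) :
    (q, y) ∈ relComp A E ↔ (q, x) ∈ A :=
  ⟨fun h => by_contra fun hqx => hA ⟨q, x, y, h, hxy, hqx⟩, fun h => ⟨x, h, hxy⟩⟩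

def sepOn (S : Set Q) (H : Set (Q × Q)) : Set (Q × Q) :=
  {p | p.1 ∈ S ∧ p.2 ∈ S ∧ Separates H p.1 p.2}

lemma Leaks.of_sepOn_subset (hB : Leaks B E) (h : sepOn (dom E) B ⊆ sepOn (dom E) A) :
    Leaks A E := by
  obtain ⟨q, x, y, ⟨z, hqz, hzy⟩, hxy, hqx⟩ := hB
  obtain ⟨-, -, q', hq'z, hq'x⟩ := @h (z, x) ⟨⟨y, hzy⟩, ⟨y, hxy⟩, q, hqz, hqx⟩
  exact ⟨q', x, y, ⟨z, hq'z, hzy⟩, hxy, hq'x⟩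

/-- Where neither `A` nor `B` leaks at `E`, columns are transported along the edges of `E`. -/
lemma sepOn_relComp_subset {S S' : Set Q} (hS : ∀ y ∈ S', ∃ x ∈ S, (x, y) ∈ E)
    (hA : ¬ Leaks A E) (hB : ¬ Leaks B E) (h : sepOn S B ⊆ sepOn S A) :
    sepOn S' (relComp B E) ⊆ sepOn S' (relComp A E) := by
  rintro ⟨y, y'⟩ ⟨hy, hy', q, hqy, hqy'⟩
  obtain ⟨x, hx, hxy⟩ := hS y hy
  obtain ⟨x', hx', hxy'⟩ := hS y' hy'
  rw [mem_relComp_iff_of_not_leaks hB hxy] at hqy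
  rw [mem_relComp_iff_of_not_leaks hB hxy'] at hqy'
  obtain ⟨-, -, q', hq'x, hq'x'⟩ := @h (x, x') ⟨hx, hx', q, hqy, hqy'⟩
  exact ⟨hy, hy', q', (mem_relComp_iff_of_not_leaks hA hxy).2 hq'x,
    (mem_relComp_iff_of_not_leaks hA hxy').not.2 hq'x'⟩

end Relations

section Segments

variable {G : ℕ → Set (Q × Q)}

lemma mem_gseg_self {i : ℕ} {a b : Q} : (a, b) ∈ Gseg G i i ↔ a = b := by
  constructor
  · rintro ⟨p, rfl, rfl, -⟩
    rfl
  · rintro rfl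
    exact ⟨fun _ => a, rfl, rfl, fun k hik hki => absurd hki (by omega)⟩

lemma gseg_succ {i n : ℕ} (hin : i ≤ n) : Gseg G i (n + 1) = relComp (Gseg G i n) (G n) := by
  ext ⟨a, c⟩
  constructor
  · rintro ⟨p, hpa, hpc, hp⟩
    exact ⟨p n, ⟨p, hpa, rfl, fun k hik hkn => hp k hik (by omega)⟩,
      hpc ▸ hp n hin n.lt_succ_self⟩
  · rintro ⟨b, ⟨p, hpa, hpb, hp⟩, hbc⟩
    refine ⟨fun k => if k ≤ n then p k else c, by simpa [hin] using hpa, by simp,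
      fun k hik hkn => ?_⟩
    rcases Nat.lt_succ_iff_lt_or_eq.1 hkn with hkn | rfl
    · simpa [hkn.le, Nat.succ_le_of_lt hkn] using hp k hik hkn
    · simpa [hpb] using hbc

lemma gseg_succ_self (n : ℕ) : Gseg G n (n + 1) = G n := by
  ext ⟨a, c⟩
  simp [gseg_succ le_rfl, relComp, mem_gseg_self]

lemma gseg_trans {i m n : ℕ} (him : i ≤ m) (hmn : m ≤ n) :
    Gseg G i n = relComp (Gseg G i m) (Gseg G m n) := by
  induction n, hmn using Nat.le_induction with
  | base =>
    ext ⟨a, c⟩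
    simp [relComp, mem_gseg_self]
  | succ n hmn ih => rw [gseg_succ (him.trans hmn), gseg_succ hmn, ih, relComp_assoc]

lemma Separates.gseg_of_le {a i n : ℕ} (hai : a ≤ i) (hin : i ≤ n) {r t : Q}
    (h : Separates (Gseg G a n) r t) : Separates (Gseg G i n) r t := by
  rw [gseg_trans hai hin] at h
  exact h.of_relComp

lemma Leaks.gseg_of_le {a i j : ℕ} (hai : a ≤ i) (hij : i ≤ j)
    (h : Leaks (Gseg G a j) (G j)) : Leaks (Gseg G i j) (G j) := by
  rw [gseg_trans hai hij] at h
  exact h.of_relComp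

lemma LeaksInfOften.mono {a i : ℕ} (h : LeaksInfOften G a) (hai : a ≤ i) : LeaksInfOften G i :=
  (h.sdiff (Set.finite_Iio i)).mono fun _ hj => hj.1.gseg_of_le hai (not_lt.1 hj.2)

lemma eventually_not_leaks {i : ℕ} (h : ¬ LeaksInfOften G i) :
    ∀ᶠ j in atTop, ¬ Leaks (Gseg G i j) (G j) := by
  rwa [LeaksInfOften, ← Nat.frequently_atTop_iff_infinite, Filter.not_frequently] at h

end Segments

section TrackingList

variable {ι : Type*} (f : ι → Set (Q × Q))

open Classical in
/-- `filterStep`, run on labels `a` standing for the graphs `f a`. -/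
noncomputable def sepFilter (acc : List ι) : List ι → List ι
  | [] => []
  | a :: rest =>
    if ∃ r t : Q, Separates (f a) r t ∧ ∀ b ∈ acc, ¬ Separates (f b) r t then
      a :: sepFilter (acc ++ [a]) rest
    else
      sepFilter acc rest

variable {f}

lemma filterStep_map (acc l : List ι) :
    filterStep (acc.map f) (l.map f) = (sepFilter f acc l).map f := by
  induction l generalizing acc with
  | nil => simp [filterStep, sepFilter]
  | cons a rest ih =>
    have hiff : (∃ r t : Q, Separates (f a) r t ∧ ∀ H ∈ acc.map f, ¬ Separates H r t) ↔
        ∃ r t : Q, Separates (f a) r t ∧ ∀ b ∈ acc, ¬ Separates (f b) r t := by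
      simp
    rw [List.map_cons, filterStep, sepFilter]
    split_ifs with h₁ h₂ h₂
    · rw [List.map_cons, ← ih, List.map_append, List.map_singleton]
    · exact absurd (hiff.1 h₁) h₂
    · exact absurd (hiff.2 h₂) h₁
    · exact ih acc

lemma sepFilter_sublist (acc l : List ι) : (sepFilter f acc l).Sublist l := by
  induction l generalizing acc with
  | nil => simp [sepFilter]
  | cons a rest ih =>
    rw [sepFilter]
    split_ifs
    · exact (ih _).cons_cons a
    · exact (ih _).cons a

lemma mem_sepFilter_of_separates {a : ι} {r t : Q} (hsep : Separates (f a) r t)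
    (l₁ l₂ acc : List ι) (hnot : ∀ b ∈ acc ++ l₁, ¬ Separates (f b) r t) :
    a ∈ sepFilter f acc (l₁ ++ a :: l₂) := by
  induction l₁ generalizing acc with
  | nil =>
    rw [List.nil_append, sepFilter, if_pos ⟨r, t, hsep, fun b hb => hnot b (by simpa using hb)⟩]
    exact List.mem_cons_self
  | cons b l₁ ih =>
    rw [List.cons_append, sepFilter]
    split_ifs
    · exact List.mem_cons_of_mem _ (ih (acc ++ [b]) (by simpa using hnot))
    · exact ih acc fun c hc => hnot c (by simp at hc ⊢; tauto)

lemma exists_mem_sepFilter_separates {a : ι} {r t : Q} {acc l : List ι} (ha : a ∈ l)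
    (hsep : Separates (f a) r t) :
    (∃ b ∈ acc, Separates (f b) r t) ∨ ∃ b ∈ sepFilter f acc l, Separates (f b) r t := by
  induction l generalizing acc with
  | nil => simp at ha
  | cons c rest ih =>
    rw [sepFilter]
    split_ifs with hc
    · rcases List.mem_cons.1 ha with rfl | ha
      · exact .inr ⟨a, List.mem_cons_self, hsep⟩
      · rcases ih (acc := acc ++ [c]) ha with ⟨b, hb, hbsep⟩ | ⟨b, hb, hbsep⟩
        · rcases List.mem_append.1 hb with hb | hb
          · exact .inl ⟨b, hb, hbsep⟩
          · exact .inr ⟨b, by simp_all, hbsep⟩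
        · exact .inr ⟨b, List.mem_cons_of_mem _ hb, hbsep⟩
    · rcases List.mem_cons.1 ha with rfl | ha
      · push Not at hc
        obtain ⟨b, hb, hbsep⟩ := hc r t hsep
        exact .inl ⟨b, hb, hbsep⟩
      · exact ih ha

variable (G : ℕ → Set (Q × Q))

/-- The tracking list as a list of indices `i`, standing for the graphs `G[i,n]`. -/
noncomputable def trackIdx : ℕ → List ℕ
  | 0 => []
  | n + 1 => sepFilter (fun a => Gseg G a (n + 1)) [] (trackIdx n ++ [n])

variable {G}

lemma mem_trackIdx_succ {n a : ℕ} (h : a ∈ trackIdx G (n + 1)) :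
    a ∈ trackIdx G n ∨ a = n := by
  simpa using (sepFilter_sublist _ _).mem h

lemma lt_of_mem_trackIdx {n a : ℕ} (h : a ∈ trackIdx G n) : a < n := by
  induction n with
  | zero => simp [trackIdx] at h
  | succ n ih => rcases mem_trackIdx_succ h with h | rfl <;> grind

lemma trackIdx_pairwise_lt (n : ℕ) : (trackIdx G n).Pairwise (· < ·) := by
  induction n with
  | zero => simp [trackIdx]
  | succ n ih =>
    refine (List.pairwise_append.2 ⟨ih, by simp, ?_⟩).sublist (sepFilter_sublist _ _)
    simpa using fun a ha => lt_of_mem_trackIdx ha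

lemma mem_trackIdx_of_lt_of_le {a m n : ℕ} (h : a ∈ trackIdx G n) (ham : a < m)
    (hmn : m ≤ n) :
    a ∈ trackIdx G m := by
  induction n, hmn using Nat.le_induction with
  | base => exact h
  | succ n hmn ih => exact ih ((mem_trackIdx_succ h).resolve_right (by omega))

lemma trackList_eq_map_trackIdx (n : ℕ) : trackList G n = (trackIdx G n).map (Gseg G · n) := by
  induction n with
  | zero => rfl
  | succ n ih =>
    have hcomp : ((trackIdx G n).map (Gseg G · n)).map (relComp · (G n)) =
        (trackIdx G n).map (Gseg G · (n + 1)) := by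
      rw [List.map_map]
      exact List.map_congr_left fun a ha => (gseg_succ (lt_of_mem_trackIdx ha).le).symm
    rw [trackList, trackIdx, ih, hcomp, ← gseg_succ_self (G := G) n,
      ← List.map_singleton (f := (Gseg G · (n + 1))),
      ← List.map_append, ← filterStep_map, List.map_nil]

lemma exists_mem_trackIdx_separates {m : ℕ} {r t : Q} (h : Separates (G m) r t) :
    ∃ a ∈ trackIdx G (m + 1), Separates (Gseg G a (m + 1)) r t := by
  rw [← gseg_succ_self (G := G) m] at h
  simpa [trackIdx] using exists_mem_sepFilter_separates (acc := [])
    (List.mem_append_right _ (List.mem_singleton_self m)) h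

lemma mem_trackIdx_succ_of_separates {n i : ℕ} {r t : Q} (hi : i ∈ trackIdx G n)
    (hsep : Separates (Gseg G i (n + 1)) r t)
    (hbefore : ∀ b ∈ trackIdx G n, b < i → ¬ Separates (Gseg G b (n + 1)) r t) :
    i ∈ trackIdx G (n + 1) := by
  obtain ⟨l₁, l₂, hl⟩ := List.append_of_mem hi
  have hl₁ : ∀ b ∈ l₁, b < i := by
    have := trackIdx_pairwise_lt (G := G) n
    rw [hl, List.pairwise_append] at this
    exact fun b hb => this.2.2 b hb i List.mem_cons_self
  rw [trackIdx, hl, List.append_assoc, List.cons_append]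
  exact mem_sepFilter_of_separates (f := (Gseg G · (n + 1))) hsep _ _ _ fun b hb =>
    hbefore b (by rw [hl]; simp_all) (hl₁ b (by simpa using hb))

end TrackingList

lemma Set.Infinite.exists_le_fst {α : Type*} [Finite α] {s : Set (ℕ × α)} (hs : s.Infinite)
    (N : ℕ) : ∃ e ∈ s, N ≤ e.1 := by
  by_contra! h
  exact hs (((Set.finite_Iio N).prod Set.finite_univ).subset fun e he => ⟨h e he, trivial⟩)

namespace GraphPlay

variable (P : GraphPlay Q)

lemma exists_pred {n : ℕ} {y : Q} (hy : y ∈ P.S (n + 1)) :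
    ∃ x ∈ P.S n, (x, y) ∈ P.G n := by
  rw [← P.him] at hy
  obtain ⟨x, hxy⟩ := hy
  exact ⟨x, P.hdom n ▸ ⟨y, hxy⟩, hxy⟩

lemma exists_mem_gseg {m n : ℕ} (hmn : m ≤ n) {x : Q} (hx : x ∈ P.S m) :
    ∃ z ∈ P.S n, (x, z) ∈ Gseg P.G m n := by
  induction n, hmn using Nat.le_induction with
  | base => exact ⟨x, hx, mem_gseg_self.2 rfl⟩
  | succ n hmn ih =>
    obtain ⟨z, hz, hxz⟩ := ih
    rw [← P.hdom] at hz
    obtain ⟨w, hzw⟩ := hz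
    exact ⟨w, P.him n ▸ ⟨z, hzw⟩, gseg_succ hmn ▸ ⟨z, hxz, hzw⟩⟩

lemma exists_leaks_of_sepOn_subset {A B : ℕ → Set (Q × Q)} {n j : ℕ} (hnj : n ≤ j)
    (hA : ∀ m, n ≤ m → A (m + 1) = relComp (A m) (P.G m))
    (hB : ∀ m, n ≤ m → B (m + 1) = relComp (B m) (P.G m))
    (hsub : sepOn (P.S n) (B n) ⊆ sepOn (P.S n) (A n)) (hleak : Leaks (B j) (P.G j)) :
    ∃ m, n ≤ m ∧ m ≤ j ∧ Leaks (A m) (P.G m) := by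
  obtain ⟨d, rfl⟩ := Nat.exists_eq_add_of_le hnj
  clear hnj
  induction d generalizing n with
  | zero => exact ⟨n, le_rfl, le_rfl, hleak.of_sepOn_subset (P.hdom n ▸ hsub)⟩
  | succ d ih =>
    by_cases hAn : Leaks (A n) (P.G n)
    · exact ⟨n, le_rfl, by omega, hAn⟩
    by_cases hBn : Leaks (B n) (P.G n)
    · exact ⟨n, le_rfl, by omega, hBn.of_sepOn_subset (P.hdom n ▸ hsub)⟩
    have hsub' : sepOn (P.S (n + 1)) (B (n + 1)) ⊆ sepOn (P.S (n + 1)) (A (n + 1)) := by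
      rw [hA n le_rfl, hB n le_rfl]
      exact sepOn_relComp_subset (fun y hy => P.exists_pred hy) hAn hBn hsub
    obtain ⟨m, hm, hmj, hleak⟩ := ih (fun m hm => hA m (by omega))
      (fun m hm => hB m (by omega)) hsub' (by rwa [Nat.add_right_comm n 1 d])
    exact ⟨m, by omega, by omega, hleak⟩

lemma exists_separates_not_below {I N n : ℕ} (hI : LeaksInfOften P.G I)
    (hquiet : ∀ a < I, ∀ j, N ≤ j → ¬ Leaks (Gseg P.G a j) (P.G j)) (hNn : N ≤ n)
    (hIn : I ≤ n) :
    ∃ r t, Separates (Gseg P.G I n) r t ∧ ∀ a < I, ¬ Separates (Gseg P.G a n) r t := by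
  obtain ⟨A, hArec, hAquiet, hAbelow⟩ : ∃ A : ℕ → Set (Q × Q),
      (∀ m, n ≤ m → A (m + 1) = relComp (A m) (P.G m)) ∧
      (∀ m, n ≤ m → ¬ Leaks (A m) (P.G m)) ∧
      ∀ a < I, ∀ r t, Separates (Gseg P.G a n) r t → Separates (A n) r t := by
    -- the finest index below `I`; for `I = 0`, the empty graph, which never separates or leaks
    cases I with
    | zero =>
      exact ⟨fun _ => ∅, fun _ _ => (relComp_empty_left _).symm,
        fun _ _ ⟨_, _, _, ⟨_, h, _⟩, _⟩ => h, fun a ha => absurd ha (Nat.not_lt_zero a)⟩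
    | succ a =>
      exact ⟨Gseg P.G a, fun m hm => gseg_succ (by omega),
        fun m hm => hquiet a a.lt_succ_self m (hNn.trans hm),
        fun b hb r t h => h.gseg_of_le (by omega) (by omega)⟩
  obtain ⟨j, hj, hnj⟩ := hI.exists_gt n
  have hnot : ¬ sepOn (P.S n) (Gseg P.G I n) ⊆ sepOn (P.S n) (A n) := fun hsub => by
    obtain ⟨m, hnm, -, hm⟩ := P.exists_leaks_of_sepOn_subset hnj.le hArec
      (fun m hm => gseg_succ (hIn.trans hm)) hsub hj
    exact hAquiet m hnm hm
  obtain ⟨⟨r, t⟩, ⟨hr, ht, hsep⟩, hnotA⟩ := Set.not_subset.1 hnot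
  exact ⟨r, t, hsep, fun a ha h => hnotA ⟨hr, ht, hAbelow a ha r t h⟩⟩

end GraphPlay

section Flow

variable {S : ℕ → Set Q} {G : ℕ → Set (Q × Q)} {T : ℕ → Set Q}

def flow (G : ℕ → Set (Q × Q)) (T : ℕ → Set Q) (β n : ℕ) : Set Q :=
  {z | ∃ w ∈ T β, (w, z) ∈ Gseg G β n}

lemma IsAccumulator.mem_of_mem_gseg (hT : IsAccumulator S G T) {m n : ℕ} (hmn : m ≤ n)
    {s t : Q} (hs : s ∈ T m) (hst : (s, t) ∈ Gseg G m n) : t ∈ T n := by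
  induction n, hmn using Nat.le_induction generalizing t with
  | base => rwa [← mem_gseg_self.1 hst]
  | succ n hmn ih =>
    obtain ⟨z, hsz, hzt⟩ := gseg_succ hmn ▸ hst
    exact hT.2 n z t (ih hsz) hzt

lemma IsAccumulator.flow_subset (hT : IsAccumulator S G T) {β n : ℕ} (hβn : β ≤ n) :
    flow G T β n ⊆ T n :=
  fun _ ⟨_, hw, hwz⟩ => hT.mem_of_mem_gseg hβn hw hwz

lemma notMem_flow_of_mem_gseg {β k n : ℕ} (hβk : β ≤ k) (hkn : k ≤ n)
    (hquiet : ∀ m, k ≤ m → ¬ Leaks (Gseg G β m) (G m)) {x z : Q}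
    (hx : x ∉ flow G T β k) (hxz : (x, z) ∈ Gseg G k n) : z ∉ flow G T β n := by
  induction n, hkn using Nat.le_induction generalizing z with
  | base => rwa [← mem_gseg_self.1 hxz]
  | succ n hkn ih =>
    obtain ⟨y, hxy, hyz⟩ := gseg_succ hkn ▸ hxz
    rintro ⟨w, hw, hwz⟩
    rw [gseg_succ (hβk.trans hkn), mem_relComp_iff_of_not_leaks (hquiet n hkn) hyz] at hwz
    exact ih hxy ⟨w, hw, hwz⟩

/-- The descendants of the entered state `u` lie in the larger flow but never in the smaller. -/
lemma ncard_flow_lt_ncard_flow [Finite Q] {P : GraphPlay Q} (hT : IsAccumulator P.S P.G T)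
    {β γ j n : ℕ} {x u : Q} (hβγ : β ≤ γ) (hγj : γ ≤ j) (hjn : j < n)
    (hquiet : ∀ m, γ ≤ m → ¬ Leaks (Gseg P.G β m) (P.G m))
    (he : (j, x, u) ∈ Entries P.G T) :
    (flow P.G T β n).ncard < (flow P.G T (j + 1) n).ncard := by
  obtain ⟨hxu, hx, hu⟩ := he
  have hsub : flow P.G T β n ⊆ flow P.G T (j + 1) n := by
    rintro z ⟨w, hw, hwz⟩
    rw [gseg_trans (by omega : β ≤ j + 1) hjn] at hwz
    obtain ⟨v, hwv, hvz⟩ := hwz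
    exact ⟨v, hT.mem_of_mem_gseg (by omega) hw hwv, hvz⟩
  obtain ⟨z, -, huz⟩ := P.exists_mem_gseg hjn (hT.1 _ hu)
  have hxz : (x, z) ∈ Gseg P.G j n := by
    rw [gseg_trans j.le_succ hjn, gseg_succ_self]
    exact ⟨u, hxu, huz⟩
  have hz : z ∉ flow P.G T β n :=
    notMem_flow_of_mem_gseg (hβγ.trans hγj) hjn.le (fun m hm => hquiet m (hγj.trans hm))
      (fun h => hx (hT.flow_subset (hβγ.trans hγj) h)) hxz
  exact Set.ncard_lt_ncard (hsub.ssubset_of_mem_notMem ⟨u, hu, huz⟩ hz)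

lemma exists_leaksInfOften [Finite Q] {P : GraphPlay Q} (h : InfiniteCapacity P) :
    ∃ i, LeaksInfOften P.G i := by
  by_contra! hno
  obtain ⟨T, hT, hinf⟩ := h
  have hgrow : ∀ r : ℕ, ∃ β, ∀ᶠ n in atTop, r ≤ (flow P.G T β n).ncard := by
    intro r
    induction r with
    | zero => exact ⟨0, .of_forall fun _ => Nat.zero_le _⟩
    | succ r ih =>
      obtain ⟨β, hβ⟩ := ih
      obtain ⟨γ, hγ⟩ :=
        ((eventually_not_leaks (hno β)).and (eventually_ge_atTop β)).exists_forall_of_atTop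
      obtain ⟨N, hN⟩ := hβ.exists_forall_of_atTop
      obtain ⟨⟨j, x, u⟩, he, hj : max γ N ≤ j⟩ := hinf.exists_le_fst (max γ N)
      refine ⟨j + 1, eventually_atTop.2 ⟨j + 1, fun n hn => ?_⟩⟩
      have := ncard_flow_lt_ncard_flow hT (hγ γ le_rfl).2 (le_of_max_le_left hj) hn
        (fun m hm => (hγ m hm).1) he
      have := hN n (by omega)
      omega
  obtain ⟨β, hβ⟩ := hgrow (Nat.card Q + 1)
  obtain ⟨n, hn⟩ := hβ.exists
  have := Set.ncard_le_card (flow P.G T β n)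
  omega

end Flow

def descAcc (P : GraphPlay Q) (i : ℕ) (q : Q) (n : ℕ) : Set Q :=
  {z | z ∈ P.S n ∧ i ≤ n ∧ (q, z) ∈ Gseg P.G i n}

lemma isAccumulator_descAcc (P : GraphPlay Q) (i : ℕ) (q : Q) :
    IsAccumulator P.S P.G (descAcc P i q) :=
  ⟨fun _ _ hz => hz.1, fun j s t ⟨_, hij, hqs⟩ hst =>
    ⟨P.him j ▸ ⟨s, hst⟩, by omega, gseg_succ hij ▸ ⟨s, hqs, hst⟩⟩⟩

lemma mem_image_fst_entries_descAcc {P : GraphPlay Q} {i j : ℕ} (hij : i ≤ j)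
    (h : Leaks (Gseg P.G i j) (P.G j)) :
    ∃ q, j ∈ Prod.fst '' Entries P.G (descAcc P i q) := by
  obtain ⟨q, x, y, hqy, hxy, hqx⟩ := h
  exact ⟨q, (j, x, y), ⟨hxy, fun hx => hqx hx.2.2,
    P.him j ▸ ⟨x, hxy⟩, by omega, gseg_succ hij ▸ hqy⟩, rfl⟩

lemma infiniteCapacity_of_leaksInfOften [Finite Q] {P : GraphPlay Q} {i : ℕ}
    (h : LeaksInfOften P.G i) : InfiniteCapacity P := by
  obtain ⟨q, hq⟩ : ∃ q, (Prod.fst '' Entries P.G (descAcc P i q)).Infinite := by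
    by_contra! hfin
    refine (h.sdiff (Set.finite_Iio i)) ((Set.finite_iUnion hfin).subset fun j hj => ?_)
    exact Set.mem_iUnion.2 (mem_image_fst_entries_descAcc (not_lt.1 hj.2) hj.1)
  exact ⟨descAcc P i q, isAccumulator_descAcc P i q, hq.of_image _⟩

lemma exists_remanent_of_separates {G : ℕ → Set (Q × Q)} {I N : ℕ} (hIN : I < N)
    (hsep : ∀ n, N ≤ n →
      ∃ r t, Separates (Gseg G I n) r t ∧ ∀ a < I, ¬ Separates (Gseg G a n) r t) :
    ∃ i, I ≤ i ∧ Remanent G i := by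
  have hbase : ∃ a ∈ trackIdx G N, I ≤ a := by
    obtain ⟨m, rfl⟩ : ∃ m, N = m + 1 := ⟨N - 1, by omega⟩
    obtain ⟨r, t, hIsep, hbelow⟩ := hsep (m + 1) le_rfl
    have hmsep : Separates (G m) r t := by
      simpa only [gseg_succ_self] using hIsep.gseg_of_le (by omega : I ≤ m) m.le_succ
    obtain ⟨a, ha, hasep⟩ := exists_mem_trackIdx_separates hmsep
    exact ⟨a, ha, not_lt.1 fun haI => hbelow a haI hasep⟩
  obtain ⟨hmem, hIi⟩ := Nat.find_spec hbase
  have hlt : Nat.find hbase < N := lt_of_mem_trackIdx hmem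
  have hpersist : ∀ n, N ≤ n → Nat.find hbase ∈ trackIdx G n := by
    intro n hn
    induction n, hn using Nat.le_induction with
    | base => exact hmem
    | succ n hn ih =>
      obtain ⟨r, t, hIsep, hbelow⟩ := hsep (n + 1) (by omega)
      refine mem_trackIdx_succ_of_separates ih (hIsep.gseg_of_le hIi (by omega)) fun b hb hbi => ?_
      -- `b` is tracked at time `N` too, so it lies below `I` by minimality
      refine hbelow b (not_le.1 fun hIb => Nat.find_min hbase hbi ⟨?_, hIb⟩)
      exact mem_trackIdx_of_lt_of_le hb (hbi.trans hlt) hn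
  refine ⟨Nat.find hbase, hIi, fun n hn => ?_⟩
  rw [trackList_eq_map_trackIdx]
  refine List.mem_map_of_mem ?_
  rcases le_total N n with hNn | hnN
  · exact hpersist n hNn
  · exact mem_trackIdx_of_lt_of_le hmem hn hnN

lemma exists_remanent_leaksInfOften {P : GraphPlay Q} (h : ∃ i, LeaksInfOften P.G i) :
    ∃ i, Remanent P.G i ∧ LeaksInfOften P.G i := by
  classical
  have hquiet : ∀ᶠ j in atTop,
      Nat.find h < j ∧ ∀ a < Nat.find h, ¬ Leaks (Gseg P.G a j) (P.G j) :=
    (eventually_gt_atTop _).and <| (Set.finite_Iio _).eventually_all.2 fun a ha =>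
      eventually_not_leaks (Nat.find_min h ha)
  obtain ⟨N, hN⟩ := hquiet.exists_forall_of_atTop
  obtain ⟨i, hIi, hi⟩ := exists_remanent_of_separates (hN N le_rfl).1 fun n hn =>
    P.exists_separates_not_below (Nat.find_spec h) (fun a ha j hj => (hN j hj).2 a ha) hn
      ((hN N le_rfl).1.le.trans hn)
  exact ⟨i, hi, (Nat.find_spec h).mono hIi⟩

/-- A support-arena play has infinite capacity iff some index is remanent and
leaks infinitely often. -/
theorem stmt12 [Fintype Q] (P : GraphPlay Q) :
    InfiniteCapacity P ↔ ∃ i, Remanent P.G i ∧ LeaksInfOften P.G i :=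
  ⟨fun h => exists_remanent_leaksInfOften (exists_leaksInfOften h),
    fun ⟨_, _, hi⟩ => infiniteCapacity_of_leaksInfOften hi⟩
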